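/- arXiv:2405.07763 — 8 statements merged into one kernel-verified Lean document; each statement's English description precedes it below -/
import Mathlib

section
/- For every r-uniform hypergraph F, every 2 ≤ s ≤ r−1, and every n, the maximum number of copies of the complete s-uniform hypergraph on r vertices K_r^(s) in an n-vertex s-uniform hypergraph containing no copy of ∂^(s)F is at most the maximum number of copies of K_r^(s+1) in an n-vertex (s+1)-uniform hypergraph containing no copy of ∂^(s+1)F. -/
/-!
Given an `s`-graph `G` without a copy of `∂^(s)F`, let `G'` be the `(s+1)`-graph of all
`(s+1)`-sets whose `s`-subsets all lie in `G`. Every copy of `K_r^(s)` in `G` is a copy of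
`K_r^(s+1)` in `G'`, and a copy of `∂^(s+1)F` in `G'` would yield a copy of `∂^(s)F` in `G`,
because every `s`-set of the shadow of `F` extends, inside an edge of `F`, to an `(s+1)`-set.
-/

/-- `G` contains a copy of `F`: an injection of vertices mapping edges to edges. -/
def ContainsCopy {α β : Type*} (G : Finset (Finset α)) (F : Finset (Finset β)) : Prop :=
  ∃ φ : β ↪ α, ∀ e ∈ F, e.map φ ∈ G

/-- The `s`-uniform shadow of a hypergraph `F`: all `s`-subsets of edges of `F`. -/
def shadowU {β : Type*} [DecidableEq β] (F : Finset (Finset β)) (s : ℕ) :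
    Finset (Finset β) :=
  F.biUnion fun B => B.powersetCard s

/-- The number of copies of `K_r^(s)` in an `s`-uniform hypergraph `G` on `Fin n`:
`r`-sets all of whose `s`-subsets are edges. -/
def KCount {n : ℕ} (G : Finset (Finset (Fin n))) (r s : ℕ) : ℕ :=
  ((Finset.univ.powersetCard r).filter fun S => ∀ f ∈ S.powersetCard s, f ∈ G).card

/-- `ex(n, K_r^(s), ∂^(s)F)`: the maximum number of copies of `K_r^(s)` in an
`s`-uniform hypergraph on `n` vertices containing no copy of the `s`-uniform shadow of `F`. -/
noncomputable def exK (n r s : ℕ) {β : Type*} [DecidableEq β] (F : Finset (Finset β)) : ℕ :=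
  sSup {m | ∃ G : Finset (Finset (Fin n)), (∀ e ∈ G, e.card = s) ∧
    ¬ ContainsCopy G (shadowU F s) ∧ KCount G r s = m}

open Finset

section

variable {α β : Type*} [DecidableEq α] [DecidableEq β]

def cliqueLift [Fintype α] (G : Finset (Finset α)) (s : ℕ) : Finset (Finset α) :=
  (univ.powersetCard (s + 1)).filter fun e => ∀ f ∈ e.powersetCard s, f ∈ G

lemma mem_cliqueLift [Fintype α] {G : Finset (Finset α)} {s : ℕ} {e : Finset α} :
    e ∈ cliqueLift G s ↔ e.card = s + 1 ∧ ∀ f ∈ e.powersetCard s, f ∈ G := by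
  simp [cliqueLift, mem_powersetCard]

lemma card_eq_of_mem_shadowU {F : Finset (Finset β)} {s : ℕ} {f : Finset β}
    (hf : f ∈ shadowU F s) : f.card = s := by
  obtain ⟨e, -, hfe⟩ := mem_biUnion.1 hf
  exact (mem_powersetCard.1 hfe).2

lemma exists_superset_mem_shadowU_succ {F : Finset (Finset β)} {s : ℕ}
    (hF : ∀ e ∈ F, s + 1 ≤ e.card) {f : Finset β} (hf : f ∈ shadowU F s) :
    ∃ f' ∈ shadowU F (s + 1), f ⊆ f' := by
  simp only [shadowU, mem_biUnion, mem_powersetCard] at hf ⊢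
  obtain ⟨e, he, hfe, hfs⟩ := hf
  obtain ⟨f', hff', hf'e, hf's⟩ :=
    exists_subsuperset_card_eq hfe (by omega : f.card ≤ s + 1) (hF e he)
  exact ⟨f', ⟨e, he, hf'e, hf's⟩, hff'⟩

lemma containsCopy_of_containsCopy_cliqueLift [Fintype α] {G : Finset (Finset α)}
    {F : Finset (Finset β)} {s : ℕ} (hF : ∀ e ∈ F, s + 1 ≤ e.card)
    (h : ContainsCopy (cliqueLift G s) (shadowU F (s + 1))) :
    ContainsCopy G (shadowU F s) := by
  obtain ⟨φ, hφ⟩ := h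
  refine ⟨φ, fun f hf => ?_⟩
  obtain ⟨f', hf', hff'⟩ := exists_superset_mem_shadowU_succ hF hf
  refine (mem_cliqueLift.1 (hφ f' hf')).2 (f.map φ) ?_
  exact mem_powersetCard.2 ⟨map_subset_map.2 hff', by rw [card_map, card_eq_of_mem_shadowU hf]⟩

lemma KCount_le_KCount_cliqueLift {n : ℕ} (G : Finset (Finset (Fin n))) (r s : ℕ) :
    KCount G r s ≤ KCount (cliqueLift G s) r (s + 1) := by
  refine card_le_card fun S hS => ?_
  rw [mem_filter] at hS ⊢
  refine ⟨hS.1, fun g hg => ?_⟩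
  rw [mem_powersetCard] at hg
  refine mem_cliqueLift.2 ⟨hg.2, fun f hf => hS.2 f ?_⟩
  rw [mem_powersetCard] at hf ⊢
  exact ⟨hf.1.trans hg.1, hf.2⟩

lemma KCount_le_choose {n : ℕ} (G : Finset (Finset (Fin n))) (r s : ℕ) :
    KCount G r s ≤ n.choose r := by
  simpa [KCount] using card_filter_le (univ.powersetCard r : Finset (Finset (Fin n))) _

end

theorem stmt2_general {r s n : ℕ} {β : Type*} [DecidableEq β]
    (hs : 2 ≤ s) (hsr : s ≤ r - 1)
    (F : Finset (Finset β)) (hF : ∀ e ∈ F, e.card = r) :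
    exK n r s F ≤ exK n r (s + 1) F := by
  have hF' : ∀ e ∈ F, s + 1 ≤ e.card := fun e he => by rw [hF e he]; omega
  have hbdd : BddAbove {m | ∃ G : Finset (Finset (Fin n)), (∀ e ∈ G, e.card = s + 1) ∧
      ¬ ContainsCopy G (shadowU F (s + 1)) ∧ KCount G r (s + 1) = m} :=
    ⟨n.choose r, by rintro m ⟨G, -, -, rfl⟩; exact KCount_le_choose G r (s + 1)⟩
  refine csSup_le' ?_
  rintro m ⟨G, -, hG, rfl⟩
  refine (KCount_le_KCount_cliqueLift G r s).trans (le_csSup hbdd ⟨cliqueLift G s,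
    fun e he => (mem_cliqueLift.1 he).1, ?_, rfl⟩)
  exact fun h => hG (containsCopy_of_containsCopy_cliqueLift hF' h)

theorem stmt2 {r s n : ℕ} {β : Type*} [DecidableEq β]
    (hs : 2 ≤ s) (hsr : s ≤ r - 1) (hr : 3 ≤ r)
    (F : Finset (Finset β)) (hF : ∀ e ∈ F, e.card = r) :
    exK n r s F ≤ exK n r (s + 1) F :=
  stmt2_general hs hsr F hF
end

section
/- Let r ≥ 3 and 1 ≤ a₁ ≤ a₂ ≤ ⋯ ≤ a_r be integers, and let G be an (r−1)-uniform hypergraph that contains no copy of the complete r-partite (r−1)-uniform hypergraph K_r^(r−1)(a₁,…,a_r). Then for every set of a_{r−1} distinct vertices v₁,…,v_{a_{r−1}} of G, the (r−1)-uniform hypergraph G(v₁) ∩ ⋯ ∩ G(v_{a_{r−1}}) contains no copy of K_{r−1}^(r−1)(a₁,…,a_{r−2},a_r). -/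
/-- `G` contains a copy of the complete `ℓ`-partite `t`-uniform hypergraph with
part sizes `c 0, …, c (ℓ-1)`: there are disjoint parts `V i` of sizes `c i` such that
every `t`-set meeting `t` distinct parts in one vertex each is an edge of `G`. -/
def ContainsCMP {α : Type*} [DecidableEq α] (G : Finset (Finset α)) (t ℓ : ℕ)
    (c : Fin ℓ → ℕ) : Prop :=
  ∃ V : Fin ℓ → Finset α,
    (∀ i j, i ≠ j → Disjoint (V i) (V j)) ∧ (∀ i, (V i).card = c i) ∧
    ∀ S : Finset (Fin ℓ), S.card = t →
      ∀ g : Fin ℓ → α, (∀ i ∈ S, g i ∈ V i) → S.image g ∈ G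

/-- `S` spans a clique `K_r^(r-1)` in the `(r-1)`-uniform hypergraph `G`. -/
def SpansClique {α : Type*} [DecidableEq α] (G : Finset (Finset α)) (r : ℕ)
    (S : Finset α) : Prop :=
  S.card = r ∧ ∀ f ∈ S.powersetCard (r - 1), f ∈ G

instance {α : Type*} [DecidableEq α] (G : Finset (Finset α)) (r : ℕ) :
    DecidablePred (SpansClique G r) := fun S =>
  decidable_of_iff (S.card = r ∧ ∀ f ∈ S.powersetCard (r - 1), f ∈ G) Iff.rfl

/-- The intersection hypergraph `G(v₁) ∩ ⋯ ∩ G(v_a)` for `vs = {v₁,…,v_a}`: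
its edges are the `(r-1)`-sets `e` disjoint from `vs` such that `e ∪ {v}` spans a
clique `K_r^(r-1)` in `G` for every `v ∈ vs`. -/
def interGraph {α : Type*} [DecidableEq α] [Fintype α] (G : Finset (Finset α)) (r : ℕ)
    (vs : Finset α) : Finset (Finset α) :=
  (Finset.univ.powersetCard (r - 1)).filter fun e =>
    Disjoint e vs ∧ ∀ v ∈ vs, SpansClique G r (insert v e)


/-! Inserting the set `{v₁,…,v_a}` as an extra part into a copy of `K_{r-1}^{(r-1)}` in
`G(v₁) ∩ ⋯ ∩ G(v_a)` gives a copy of `K_r^{(r-1)}` in `G` with the required part sizes.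
Indeed, a full transversal of the `r` parts is `{v} ∪ e` with `v ∈ {v₁,…,v_a}` and `e` an edge of
the intersection hypergraph, so it spans a clique `K_r^{(r-1)}` of `G`; and every transversal of
`r - 1` of the parts is an `(r-1)`-subset of a full transversal, hence an edge of `G`. -/

open Finset

theorem pairwise_disjoint_insertNth {α : Type*} {m : ℕ} {V : Fin m → Finset α} {s : Finset α}
    (p : Fin (m + 1)) (hV : ∀ i j, i ≠ j → Disjoint (V i) (V j)) (hs : ∀ i, Disjoint (V i) s) :
    ∀ i j, i ≠ j →
      Disjoint (Fin.insertNth (α := fun _ => Finset α) p s V i)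
        (Fin.insertNth (α := fun _ => Finset α) p s V j) := by
  intro i j hij
  induction i using Fin.succAboveCases p <;> induction j using Fin.succAboveCases p
  · exact absurd rfl hij
  · simpa using (hs _).symm
  · simpa using hs _
  · simpa using hV _ _ (fun h => hij (congrArg _ h))

section
variable {α : Type*} [DecidableEq α]

theorem mem_interGraph [Fintype α] {G : Finset (Finset α)} {r : ℕ} {vs e : Finset α} :
    e ∈ interGraph G r vs ↔
      e.card = r - 1 ∧ Disjoint e vs ∧ ∀ v ∈ vs, SpansClique G r (insert v e) := by
  simp [interGraph]

theorem SpansClique.image_mem {G : Finset (Finset α)} {r : ℕ} {h : Fin r → α}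
    (hh : SpansClique G r (univ.image h)) {S : Finset (Fin r)} (hS : S.card = r - 1) :
    S.image h ∈ G := by
  have hinj : Set.InjOn h S :=
    (card_image_iff.1 (by rw [hh.1, card_univ, Fintype.card_fin])).mono (by simp)
  exact hh.2 _ (mem_powersetCard.2 ⟨image_subset_image (subset_univ S), by
    rw [card_image_of_injOn hinj, hS]⟩)

theorem spansClique_image_of_succAbove [Fintype α] {G : Finset (Finset α)} {m : ℕ}
    {vs : Finset α} (p : Fin (m + 1)) {h : Fin (m + 1) → α} (hp : h p ∈ vs)
    (hedge : univ.image (h ∘ p.succAbove) ∈ interGraph G (m + 1) vs) :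
    SpansClique G (m + 1) (univ.image h) := by
  have himage : univ.image h = insert (h p) (univ.image (h ∘ p.succAbove)) := by
    rw [Fin.univ_succAbove m p, cons_eq_insert, image_insert, map_eq_image, image_image]
    rfl
  exact himage ▸ (mem_interGraph.1 hedge).2.2 _ hp

theorem disjoint_of_forall_image_disjoint {ℓ : ℕ} {V : Fin ℓ → Finset α} {s : Finset α}
    (hV : ∀ i, (V i).Nonempty)
    (hdisj : ∀ g : Fin ℓ → α, (∀ i, g i ∈ V i) → Disjoint (univ.image g) s) (i : Fin ℓ) :
    Disjoint (V i) s := by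
  refine disjoint_left.2 fun x hx hxs => ?_
  let g : Fin ℓ → α := Function.update (fun j => (hV j).choose) i x
  have hg : ∀ j, g j ∈ V j := by
    intro j
    rcases eq_or_ne j i with rfl | hji
    · simpa [g] using hx
    · simpa [g, hji] using (hV j).choose_spec
  exact disjoint_left.1 (hdisj g hg) (mem_image.2 ⟨i, mem_univ i, by simp [g]⟩) hxs

theorem image_mem_of_insertNth [Fintype α] {G : Finset (Finset α)} {m : ℕ} {vs : Finset α}
    {V : Fin m → Finset α} (p : Fin (m + 1)) (hV : ∀ i, (V i).Nonempty) (hvs : vs.Nonempty)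
    (hedge : ∀ g : Fin m → α, (∀ i, g i ∈ V i) → univ.image g ∈ interGraph G (m + 1) vs)
    {S : Finset (Fin (m + 1))} (hS : S.card = m) {g : Fin (m + 1) → α}
    (hg : ∀ i ∈ S, g i ∈ Fin.insertNth (α := fun _ => Finset α) p vs V i) :
    S.image g ∈ G := by
  set W : Fin (m + 1) → Finset α := Fin.insertNth p vs V
  have hW : ∀ i, (W i).Nonempty := fun i => by
    induction i using Fin.succAboveCases p <;> simp [W, hvs, hV]
  let h : Fin (m + 1) → α := fun i => if i ∈ S then g i else (hW i).choose
  have hh : ∀ i, h i ∈ W i := fun i => by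
    by_cases hi : i ∈ S
    · simpa [h, hi] using hg i hi
    · simpa [h, hi] using (hW i).choose_spec
  have hclique : SpansClique G (m + 1) (univ.image h) :=
    spansClique_image_of_succAbove p (by simpa [W] using hh p)
      (hedge _ fun i => by simpa [W] using hh (p.succAbove i))
  rw [image_congr fun i hi => (if_pos hi : h i = g i).symm]
  exact hclique.image_mem hS

end

theorem stmt4_general {α : Type*} [DecidableEq α] [Fintype α] {r : ℕ} (hr : 3 ≤ r)
    (a : ℕ → ℕ) (ha1 : ∀ i, 1 ≤ i → i ≤ r → 1 ≤ a i)
    (G : Finset (Finset α))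
    (hfree : ¬ ContainsCMP G (r - 1) r (fun i => a (i.val + 1)))
    (vs : Finset α) (hvs : vs.card = a (r - 1)) :
    ¬ ContainsCMP (interGraph G r vs) (r - 1) (r - 1)
        (fun i => if (i : ℕ) = r - 2 then a r else a (i.val + 1)) := by
  obtain ⟨n, rfl⟩ : ∃ n, r = n + 2 := ⟨r - 2, by omega⟩
  rintro ⟨V, hVdisj, hVcard, hVedge⟩
  have hVne : ∀ i, (V i).Nonempty := fun i => by
    rw [← card_pos, hVcard i]
    beta_reduce
    split_ifs <;> exact ha1 _ (by omega) (by omega)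
  have hvsne : vs.Nonempty := card_pos.1 (hvs ▸ ha1 _ (by omega) (by omega))
  have hedge : ∀ g : Fin (n + 1) → α, (∀ i, g i ∈ V i) →
      univ.image g ∈ interGraph G (n + 2) vs := fun g hg =>
    hVedge univ (card_fin _) g fun i _ => hg i
  have hVvs : ∀ i, Disjoint (V i) vs := disjoint_of_forall_image_disjoint hVne
    fun g hg => (mem_interGraph.1 (hedge g hg)).2.1
  -- `vs` becomes the part of index `n`, of size `a (n + 1)`.
  refine hfree ⟨Fin.insertNth (Fin.last n).castSucc vs V,
    pairwise_disjoint_insertNth _ hVdisj hVvs, fun i => ?_,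
    fun S hS g hg => image_mem_of_insertNth _ hVne hvsne hedge hS hg⟩
  induction i using Fin.succAboveCases (Fin.last n).castSucc with
  | x => simpa using hvs
  | p j =>
    rw [Fin.insertNth_apply_succAbove, hVcard]
    induction j using Fin.lastCases with
    | last => simp
    | cast j => simp [Fin.succAbove_castSucc_of_lt _ _ (Fin.castSucc_lt_last j), j.isLt.ne]

theorem stmt4 {α : Type*} [DecidableEq α] [Fintype α] {r : ℕ} (hr : 3 ≤ r)
    (a : ℕ → ℕ) (ha1 : ∀ i, 1 ≤ i → i ≤ r → 1 ≤ a i)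
    (hmono : ∀ i, 1 ≤ i → i < r → a i ≤ a (i + 1))
    (G : Finset (Finset α)) (hG : ∀ e ∈ G, e.card = r - 1)
    (hfree : ¬ ContainsCMP G (r - 1) r (fun i => a (i.val + 1)))
    (vs : Finset α) (hvs : vs.card = a (r - 1)) :
    ¬ ContainsCMP (interGraph G r vs) (r - 1) (r - 1)
        (fun i => if (i : ℕ) = r - 2 then a r else a (i.val + 1)) :=
  stmt4_general hr a ha1 G hfree vs hvs
end

section
/- Let r ≥ 3, let a ≥ 2 and A, N be positive integers with N ≤ 2A and (N^{a/(a−1)})/(2(2A)^{1/(a−1)}) ≥ 1. Let X be a set of size N and 𝓐 a family of a-element subsets of X with |𝓐| = A. Then there exists Y ⊆ X with |Y| ≥ N^{a/(a−1)}/(2(2A)^{1/(a−1)}) such that no member of 𝓐 is a subset of Y. -/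
/-!
Choose each element of `X` independently with probability `p`. The chosen set has expected size
`p N`, and in expectation `A p ^ a` members of `𝓐` lie inside it; deleting one element from each of
those leaves an `𝓐`-free set, so some choice yields an `𝓐`-free set of size at least
`p N - A p ^ a`. For `p = (N / 2A) ^ (1 / (a - 1))`, which is at most `1` because `N ≤ 2A`, we have
`A p ^ a = p N / 2`, and `p N / 2` is the bound. Expectations are weighted sums over the powerset
of `X`, the weight of `S` being `p ^ |S| (1 - p) ^ (|X| - |S|)`.
-/

open Finset

section

variable {ι : Type*}

theorem sum_powerset_filter_superset_pow_mul_pow [DecidableEq ι] {R : Type*} [CommSemiring R]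
    (p q : R) {X s : Finset ι} (hs : s ⊆ X) :
    ∑ S ∈ X.powerset with s ⊆ S, p ^ #S * q ^ (#X - #S) = p ^ #s * (p + q) ^ (#X - #s) := by
  let g i := if i ∈ s then 0 else q
  have hprod : ∏ i ∈ X, (p + g i) = p ^ #s * (p + q) ^ (#X - #s) := by
    rw [← prod_sdiff hs, mul_comm, ← card_sdiff_of_subset hs, ← prod_const, ← prod_const]
    congr 1 <;> refine prod_congr rfl fun i hi ↦ ?_
    · simp [g, hi]
    · simp [g, (mem_sdiff.1 hi).2]
  rw [← hprod, prod_add, sum_filter]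
  refine sum_congr rfl fun S hS ↦ ?_
  rw [prod_const]
  split_ifs with hsS
  · rw [prod_congr rfl (g := fun _ ↦ q) fun i hi ↦ if_neg fun his ↦ (mem_sdiff.1 hi).2 (hsS his),
      prod_const, card_sdiff_of_subset (mem_powerset.1 hS)]
  · obtain ⟨i, his, hiS⟩ := not_subset.1 hsS
    rw [prod_eq_zero (mem_sdiff.2 ⟨hs his, hiS⟩) (by simp [g, his]), mul_zero]

theorem exists_mem_sum_mul_le {α : Type*} {t : Finset α} {w f : α → ℝ}
    (hw₀ : ∀ i ∈ t, 0 ≤ w i) (hw₁ : ∑ i ∈ t, w i = 1) : ∃ i ∈ t, ∑ j ∈ t, w j * f j ≤ f i := by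
  obtain ⟨i, hi, hmax⟩ := t.exists_max_image f (nonempty_of_sum_ne_zero (hw₁ ▸ one_ne_zero))
  refine ⟨i, hi, ?_⟩
  calc ∑ j ∈ t, w j * f j ≤ ∑ j ∈ t, w j * f i :=
        sum_le_sum fun j hj ↦ mul_le_mul_of_nonneg_left (hmax j hj) (hw₀ j hj)
    _ = f i := by rw [← sum_mul, hw₁, one_mul]

def binomialWeight (X : Finset ι) (p : ℝ) (S : Finset ι) : ℝ := p ^ #S * (1 - p) ^ (#X - #S)

namespace binomialWeight

variable {X : Finset ι} {p : ℝ}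

theorem nonneg (hp₀ : 0 ≤ p) (hp₁ : p ≤ 1) (S : Finset ι) : 0 ≤ binomialWeight X p S := by
  unfold binomialWeight
  have : 0 ≤ 1 - p := sub_nonneg.2 hp₁
  positivity

theorem sum_powerset (X : Finset ι) (p : ℝ) : ∑ S ∈ X.powerset, binomialWeight X p S = 1 := by
  simp [binomialWeight, sum_pow_mul_eq_add_pow]

theorem sum_powerset_mul_card_filter_subset [DecidableEq ι] {κ : Type*} {F : Finset κ}
    {t : κ → Finset ι} (ht : ∀ k ∈ F, t k ⊆ X) :
    ∑ S ∈ X.powerset, binomialWeight X p S * #{k ∈ F | t k ⊆ S} = ∑ k ∈ F, p ^ #(t k) := by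
  simp only [card_filter, Nat.cast_sum, mul_sum, Nat.cast_ite, Nat.cast_one, Nat.cast_zero,
    mul_ite, mul_one, mul_zero]
  rw [sum_comm]
  refine sum_congr rfl fun k hk ↦ ?_
  simp only [binomialWeight, ← sum_filter,
    sum_powerset_filter_superset_pow_mul_pow p (1 - p) (ht k hk)]
  simp

theorem sum_powerset_mul_card [DecidableEq ι] (X : Finset ι) (p : ℝ) :
    ∑ S ∈ X.powerset, binomialWeight X p S * #S = p * #X := by
  have hcard : ∀ S ∈ X.powerset, #S = #{x ∈ X | {x} ⊆ S} := fun S hS ↦ by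
    simp only [singleton_subset_iff, filter_mem_eq_inter, inter_eq_right.2 (mem_powerset.1 hS)]
  rw [sum_congr rfl fun S hS ↦ by rw [hcard S hS],
    sum_powerset_mul_card_filter_subset fun x hx ↦ singleton_subset_iff.2 hx]
  simp [mul_comm]

end binomialWeight

theorem exists_subset_card_sub_card_filter_subset_ge [DecidableEq ι] {𝓐 : Finset (Finset ι)}
    {X : Finset ι} (h𝓐 : ∀ s ∈ 𝓐, s ⊆ X) {p : ℝ} (hp₀ : 0 ≤ p) (hp₁ : p ≤ 1) :
    ∃ S ⊆ X, p * #X - ∑ s ∈ 𝓐, p ^ #s ≤ #S - #{s ∈ 𝓐 | s ⊆ S} := by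
  obtain ⟨S, hS, hle⟩ := exists_mem_sum_mul_le (f := fun S ↦ (#S : ℝ) - #{s ∈ 𝓐 | s ⊆ S})
    (fun S _ ↦ binomialWeight.nonneg hp₀ hp₁ S) (binomialWeight.sum_powerset X p)
  refine ⟨S, mem_powerset.1 hS, ?_⟩
  have hbad := binomialWeight.sum_powerset_mul_card_filter_subset (p := p) (t := fun s ↦ s) h𝓐
  simp only [mul_sub, sum_sub_distrib, binomialWeight.sum_powerset_mul_card, hbad] at hle
  exact hle

theorem exists_subset_card_le_add_forall_not_subset [DecidableEq ι] {𝓐 : Finset (Finset ι)}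
    (h𝓐 : ∀ s ∈ 𝓐, s.Nonempty) (S : Finset ι) :
    ∃ Y ⊆ S, #S ≤ #Y + #{s ∈ 𝓐 | s ⊆ S} ∧ ∀ s ∈ 𝓐, ¬ s ⊆ Y := by
  let D := {s ∈ 𝓐 | s ⊆ S}.attach.image fun s ↦ (h𝓐 s.1 (mem_filter.1 s.2).1).choose
  refine ⟨S \ D, sdiff_subset, ?_, fun s hs hsY ↦ ?_⟩
  · calc #S ≤ #(S \ D) + #D := card_le_card_sdiff_add_card
      _ ≤ #(S \ D) + #{s ∈ 𝓐 | s ⊆ S} := by grw [card_image_le, card_attach]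
  · have hsS : s ∈ {s ∈ 𝓐 | s ⊆ S} := mem_filter.2 ⟨hs, hsY.trans sdiff_subset⟩
    have hD : (h𝓐 s hs).choose ∈ D := mem_image.2 ⟨⟨s, hsS⟩, mem_attach _ _, rfl⟩
    exact (mem_sdiff.1 (hsY (h𝓐 s hs).choose_spec)).2 hD

theorem exists_subset_forall_not_subset {𝓐 : Finset (Finset ι)} {X : Finset ι}
    (h𝓐 : ∀ s ∈ 𝓐, s ⊆ X ∧ s.Nonempty) {p : ℝ} (hp₀ : 0 ≤ p) (hp₁ : p ≤ 1) :
    ∃ Y ⊆ X, p * #X - ∑ s ∈ 𝓐, p ^ #s ≤ #Y ∧ ∀ s ∈ 𝓐, ¬ s ⊆ Y := by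
  classical
  obtain ⟨S, hSX, hS⟩ :=
    exists_subset_card_sub_card_filter_subset_ge (fun s hs ↦ (h𝓐 s hs).1) hp₀ hp₁
  obtain ⟨Y, hYS, hY, hfree⟩ :=
    exists_subset_card_le_add_forall_not_subset (fun s hs ↦ (h𝓐 s hs).2) S
  refine ⟨Y, hYS.trans hSX, ?_, hfree⟩
  have : (#S : ℝ) ≤ #Y + #{s ∈ 𝓐 | s ⊆ S} := by exact_mod_cast hY
  linarith

end

theorem rpow_one_div_sub_one_pow {x : ℝ} (hx : 0 ≤ x) {a : ℕ} (ha : 2 ≤ a) :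
    (x ^ (1 / ((a : ℝ) - 1))) ^ (a - 1) = x := by
  have : (1 : ℝ) / ((a : ℝ) - 1) = ((a - 1 : ℕ) : ℝ)⁻¹ := by
    rw [one_div, Nat.cast_sub (by omega), Nat.cast_one]
  rw [this, Real.rpow_inv_natCast_pow hx (by omega)]

theorem mul_sub_mul_pow_eq_rpow_div {n m : ℝ} (hn : 0 ≤ n) (hnm : n ≤ 2 * m) {a : ℕ}
    (ha : 2 ≤ a) :
    (n / (2 * m)) ^ (1 / ((a : ℝ) - 1)) * n - m * ((n / (2 * m)) ^ (1 / ((a : ℝ) - 1))) ^ a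
      = n ^ ((a : ℝ) / ((a : ℝ) - 1)) / (2 * (2 * m) ^ (1 / ((a : ℝ) - 1))) := by
  have ha₁ : 0 < (a : ℝ) - 1 := by
    have : (2 : ℝ) ≤ a := by exact_mod_cast ha
    linarith
  set e : ℝ := 1 / ((a : ℝ) - 1) with he
  set p := (n / (2 * m)) ^ e with hp
  have hpow : m * p ^ a = p * n / 2 := by
    rw [← Nat.sub_add_cancel (by omega : 1 ≤ a), pow_succ,
      rpow_one_div_sub_one_pow (div_nonneg hn (by linarith)) ha]
    rcases eq_or_ne m 0 with rfl | hm
    · simp [show n = 0 by linarith]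
    · field_simp
  have hexp : (a : ℝ) / ((a : ℝ) - 1) = 1 + e := by
    rw [he]
    field_simp
    ring
  rw [hpow, hexp, Real.rpow_add' hn (by positivity), Real.rpow_one, hp,
    Real.div_rpow hn (by linarith) e]
  ring

theorem stmt6_general {ι : Type*} {a N A : ℕ} (ha : 2 ≤ a)
    (hNA : N ≤ 2 * A)
    (X : Finset ι) (hX : X.card = N)
    (𝓐 : Finset (Finset ι)) (h𝓐 : ∀ s ∈ 𝓐, s ⊆ X ∧ s.card = a)
    (h𝓐card : 𝓐.card = A) :
    ∃ Y ⊆ X,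
      (N : ℝ) ^ ((a : ℝ) / ((a : ℝ) - 1))
          / (2 * (2 * (A : ℝ)) ^ ((1 : ℝ) / ((a : ℝ) - 1))) ≤ (Y.card : ℝ) ∧
      ∀ s ∈ 𝓐, ¬ s ⊆ Y := by
  have hNA' : (N : ℝ) ≤ 2 * A := by exact_mod_cast hNA
  set p : ℝ := ((N : ℝ) / (2 * A)) ^ ((1 : ℝ) / ((a : ℝ) - 1)) with hp
  have hp₀ : 0 ≤ p := by positivity
  have hp₁ : p ≤ 1 := Real.rpow_le_one (by positivity) (div_le_one_of_le₀ hNA' (by positivity))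
    (one_div_nonneg.2 (sub_nonneg.2 (by exact_mod_cast (by omega : 1 ≤ a))))
  obtain ⟨Y, hYX, hY, hfree⟩ := exists_subset_forall_not_subset
    (fun s hs ↦ ⟨(h𝓐 s hs).1, card_pos.1 ((h𝓐 s hs).2 ▸ by omega)⟩) hp₀ hp₁
  refine ⟨Y, hYX, le_of_eq_of_le ?_ hY, hfree⟩
  rw [sum_congr rfl fun s hs ↦ by rw [(h𝓐 s hs).2], sum_const, nsmul_eq_mul, h𝓐card, hX, hp,
    mul_sub_mul_pow_eq_rpow_div (Nat.cast_nonneg N) hNA' ha]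

theorem stmt6 {ι : Type*} [DecidableEq ι] {r a N A : ℕ} (hr : 3 ≤ r) (ha : 2 ≤ a)
    (hN : 0 < N) (hA : 0 < A) (hNA : N ≤ 2 * A)
    (hone : (1 : ℝ) ≤ (N : ℝ) ^ ((a : ℝ) / ((a : ℝ) - 1))
        / (2 * (2 * (A : ℝ)) ^ ((1 : ℝ) / ((a : ℝ) - 1))))
    (X : Finset ι) (hX : X.card = N)
    (𝓐 : Finset (Finset ι)) (h𝓐 : ∀ s ∈ 𝓐, s ⊆ X ∧ s.card = a)
    (h𝓐card : 𝓐.card = A) :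
    ∃ Y ⊆ X,
      (N : ℝ) ^ ((a : ℝ) / ((a : ℝ) - 1))
          / (2 * (2 * (A : ℝ)) ^ ((1 : ℝ) / ((a : ℝ) - 1))) ≤ (Y.card : ℝ) ∧
      ∀ s ∈ 𝓐, ¬ s ⊆ Y :=
  stmt6_general ha hNA X hX 𝓐 h𝓐 h𝓐card
end

section
/- Let r ≥ 3 and 1 ≤ a₁ ≤ ⋯ ≤ a_r be integers. Construct an (r−1)-uniform hypergraph H on vertex set A ⊔ B where |A| = ⌊n/r⌋, |B| = ⌈(r−1)n/r⌉, H restricted to B is any K_{r−1}^(r−1)(a₁,…,a_{r−1})-free (r−1)-uniform hypergraph, every (r−1)-set consisting of one vertex of A and an (r−2)-subset of B is an edge, and there are no other edges meeting A. Then H contains no copy of K_r^(r−1)(a₁,…,a_r). -/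
open Finset

section

variable {α : Type*} [DecidableEq α]

def IsCompleteMultipartiteIn {ℓ : ℕ} (G : Finset (Finset α)) (t : ℕ) (V : Fin ℓ → Finset α) :
    Prop :=
  ∀ S : Finset (Fin ℓ), S.card = t → ∀ g : Fin ℓ → α, (∀ i ∈ S, g i ∈ V i) → S.image g ∈ G

namespace IsCompleteMultipartiteIn

variable {ℓ t : ℕ} {G : Finset (Finset α)} {V : Fin ℓ → Finset α}

theorem mono_parts {W : Fin ℓ → Finset α} (hV : IsCompleteMultipartiteIn G t V)
    (hW : ∀ i, W i ⊆ V i) : IsCompleteMultipartiteIn G t W :=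
  fun S hS g hg => hV S hS g fun i hi => hW i (hg i hi)

theorem mono_edges {G' : Finset (Finset α)} {A : Finset α} (hV : IsCompleteMultipartiteIn G t V)
    (hVA : ∀ i, Disjoint (V i) A) (hGG' : ∀ e ∈ G, Disjoint e A → e ∈ G') :
    IsCompleteMultipartiteIn G' t V := by
  intro S hS g hg
  refine hGG' _ (hV S hS g hg) (disjoint_left.2 fun x hx hxA => ?_)
  obtain ⟨i, hi, rfl⟩ := mem_image.1 hx
  exact disjoint_left.1 (hVA i) (hg i hi) hxA

theorem comp_injective [Nonempty α] {ℓ' : ℕ} (hV : IsCompleteMultipartiteIn G t V)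
    {σ : Fin ℓ' → Fin ℓ} (hσ : σ.Injective) : IsCompleteMultipartiteIn G t (V ∘ σ) := by
  intro S hS g hg
  set g' := Function.extend σ g fun _ => Classical.arbitrary α
  have hg' : ∀ i, g' (σ i) = g i := hσ.extend_apply g _
  have hedge := hV (S.image σ) (by rwa [card_image_of_injective _ hσ]) g' (by
    simp only [mem_image, forall_exists_index, and_imp]
    rintro _ i hi rfl
    rw [hg']
    exact hg i hi)
  rwa [image_image, show g' ∘ σ = g from funext hg'] at hedge

theorem exists_edge_superset (hV : IsCompleteMultipartiteIn G t V) (htℓ : t ≤ ℓ)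
    {g : Fin ℓ → α} (hg : ∀ i, g i ∈ V i) {I : Finset (Fin ℓ)} (hI : I.card ≤ t) :
    ∃ e ∈ G, I.image g ⊆ e := by
  obtain ⟨S, hIS, hS⟩ := exists_superset_card_eq (n := t) hI (by simpa using htℓ)
  exact ⟨S.image g, hV S hS g fun i _ => hg i, image_subset_image hIS⟩

/-- Since `t ≥ 2`, vertices of two distinct parts lie in a common edge. -/
theorem exists_forall_ne_disjoint (hV : IsCompleteMultipartiteIn G t V)
    (hdisj : ∀ i j, i ≠ j → Disjoint (V i) (V j)) (hne : ∀ i, (V i).Nonempty)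
    (ht : 2 ≤ t) (htℓ : t ≤ ℓ) {A : Finset α} (hA : ∀ e ∈ G, (e ∩ A).card ≤ 1) :
    ∃ k, ∀ j, j ≠ k → Disjoint (V j) A := by
  by_cases hmeet : ∃ k, ¬ Disjoint (V k) A
  swap
  · push Not at hmeet
    exact ⟨⟨0, by omega⟩, fun j _ => hmeet j⟩
  obtain ⟨k, hk⟩ := hmeet
  obtain ⟨x, hxk, hxA⟩ := not_disjoint_iff.1 hk
  refine ⟨k, fun j hjk => disjoint_left.2 fun y hyj hyA => ?_⟩
  choose v hv using hne
  set g := Function.update (Function.update v k x) j y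
  have hg : ∀ i, g i ∈ V i := by
    intro i
    rcases eq_or_ne i j with rfl | hij
    · simpa [g] using hyj
    rcases eq_or_ne i k with rfl | hik
    · simpa [g, hij] using hxk
    · simpa [g, hij, hik] using hv i
  have hpair : ({j, k} : Finset (Fin ℓ)).card ≤ t := card_le_two.trans ht
  obtain ⟨e, he, hjke⟩ := hV.exists_edge_superset htℓ hg hpair
  have hxy : y ≠ x := fun h => disjoint_left.1 (hdisj j k hjk) hyj (h ▸ hxk)
  have hsub : ({y, x} : Finset α) ⊆ e ∩ A := by
    have hgj : g j = y := by simp [g]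
    have hgk : g k = x := by simp [g, hjk.symm]
    rw [image_insert, image_singleton, hgj, hgk] at hjke
    exact subset_inter hjke (insert_subset hyA (singleton_subset_iff.2 hxA))
  have h2 := (card_le_card hsub).trans (hA e he)
  rw [card_pair hxy] at h2
  omega

end IsCompleteMultipartiteIn

theorem containsCMP_of_le_card {G : Finset (Finset α)} {t ℓ : ℕ} {c : Fin ℓ → ℕ}
    {V : Fin ℓ → Finset α} (hdisj : ∀ i j, i ≠ j → Disjoint (V i) (V j))
    (hV : IsCompleteMultipartiteIn G t V) (hc : ∀ i, c i ≤ (V i).card) : ContainsCMP G t ℓ c := by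
  choose W hWV hW using fun i => exists_subset_card_eq (hc i)
  exact ⟨W, fun i j hij => (hdisj i j hij).mono (hWV i) (hWV j), hW, hV.mono_parts hWV⟩

end

theorem Fin.castSucc_le_succAbove {m : ℕ} (k : Fin (m + 1)) (i : Fin m) :
    i.castSucc ≤ k.succAbove i := by
  rcases Fin.castSucc_lt_or_lt_succ k i with h | h
  · rw [Fin.succAbove_of_castSucc_lt _ _ h]
  · rw [Fin.succAbove_of_lt_succ _ _ h]
    exact Fin.castSucc_le_succ i

theorem stmt7_general {α : Type*} [DecidableEq α] {r : ℕ} (hr : 3 ≤ r)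
    (a : ℕ → ℕ) (ha1 : ∀ i, 1 ≤ i → i ≤ r → 1 ≤ a i)
    (hmono : ∀ i, 1 ≤ i → i < r → a i ≤ a (i + 1))
    (A B : Finset α) (hAB : Disjoint A B)
    (GB : Finset (Finset α)) (hGB : ∀ e ∈ GB, e ⊆ B ∧ e.card = r - 1)
    (hGBfree : ¬ ContainsCMP GB (r - 1) (r - 1) (fun i => a (i.val + 1)))
    (H : Finset (Finset α))
    (hH : ∀ e : Finset α,
      e ∈ H ↔ e ∈ GB ∨ ((e ∩ A).card = 1 ∧ e \ A ⊆ B ∧ e.card = r - 1)) :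
    ¬ ContainsCMP H (r - 1) r (fun i => a (i.val + 1)) := by
  rintro ⟨V, hdisj, hcard, hV⟩
  obtain ⟨m, rfl⟩ : ∃ m, r = m + 1 := ⟨r - 1, by omega⟩
  replace hV : IsCompleteMultipartiteIn H m V := hV
  have hne : ∀ i, (V i).Nonempty := fun i => by
    rw [← card_pos, hcard]
    exact ha1 _ (by omega) (by omega)
  have : Nonempty α := ⟨(hne 0).choose⟩
  have hHA : ∀ e ∈ H, (e ∩ A).card ≤ 1 := by
    intro e he
    rcases (hH e).1 he with he | ⟨he, -⟩
    · simp [disjoint_iff_inter_eq_empty.1 (hAB.symm.mono_left (hGB e he).1)]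
    · exact he.le
  obtain ⟨k, hk⟩ := hV.exists_forall_ne_disjoint hdisj hne (by omega) (by omega) hHA
  have hsucc : IsCompleteMultipartiteIn GB m (V ∘ k.succAbove) :=
    (hV.comp_injective Fin.succAbove_right_injective).mono_edges
      (fun i => hk _ (Fin.succAbove_ne k i))
      fun e he heA => ((hH e).1 he).resolve_right fun h => by
        simp [disjoint_iff_inter_eq_empty.1 heA] at h
  have ha : Monotone fun i : Fin (m + 1) => a (i.val + 1) :=
    Fin.monotone_iff_le_succ.2 fun i => by simpa using hmono (i.val + 1) (by omega) (by omega)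
  refine hGBfree (containsCMP_of_le_card (fun i j hij => hdisj _ _ ?_) hsucc fun i => ?_)
  · exact Fin.succAbove_right_injective.ne hij
  · simpa [hcard] using ha (Fin.castSucc_le_succAbove k i)

theorem stmt7 {α : Type*} [DecidableEq α] {r n : ℕ} (hr : 3 ≤ r)
    (a : ℕ → ℕ) (ha1 : ∀ i, 1 ≤ i → i ≤ r → 1 ≤ a i)
    (hmono : ∀ i, 1 ≤ i → i < r → a i ≤ a (i + 1))
    (A B : Finset α) (hAB : Disjoint A B)
    (hA : A.card = n / r) (hB : B.card = n - n / r)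
    (GB : Finset (Finset α)) (hGB : ∀ e ∈ GB, e ⊆ B ∧ e.card = r - 1)
    (hGBfree : ¬ ContainsCMP GB (r - 1) (r - 1) (fun i => a (i.val + 1)))
    (H : Finset (Finset α))
    (hH : ∀ e : Finset α,
      e ∈ H ↔ e ∈ GB ∨ ((e ∩ A).card = 1 ∧ e \ A ⊆ B ∧ e.card = r - 1)) :
    ¬ ContainsCMP H (r - 1) r (fun i => a (i.val + 1)) :=
  stmt7_general hr a ha1 hmono A B hAB GB hGB hGBfree H hH
end

section
/- Let r ≥ 3 and let H be an r-partite r-uniform hypergraph with parts V₁,…,V_r satisfying: (1) every (r−1)-subset of V(H) is contained in at most one edge of H; and (2) for every choice of pairs {x_i, y_i} ⊆ V_i with x_i ≠ y_i for each 1 ≤ i ≤ r, there exists some i such that ({x₁,…,x_r}∖{x_i}) ∪ {y_i} is not an edge of H. Let G = ∂^(r−1)H be the (r−1)-uniform shadow of H. Then every r-set spanning a clique K_r^(r−1) in G is an edge of H; in particular, no two cliques K_r^(r−1) in G share an edge of G, so G contains no copy of K_r^(r−1)(1,…,1,2). -/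
/-! Every edge of `H` is a transversal of the parts. A clique `S` of the shadow has each facet
`S ∖ {s}` inside an edge; as `r ≥ 3`, any two vertices of `S` avoid some common `s`, so they lie
in one transversal, hence in different parts, and `S` is itself a transversal `x`. If `S ∉ H`,
the edge through `S ∖ {x i}` is `S` with `x i` swapped for some other `y i ∈ V i`, and these
swaps violate (2). Two cliques sharing an edge of the shadow are then two edges of `H` through
one `(r-1)`-set, violating (1). -/

open Finset Function

theorem Finset.image_update_univ {ι α : Type*} [Fintype ι] [DecidableEq ι] [DecidableEq α]
    {x : ι → α} (hx : Injective x) (i : ι) (b : α) :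
    univ.image (update x i b) = insert b ((univ.image x).erase (x i)) := by
  ext a
  simp only [mem_image, mem_univ, true_and, mem_insert, mem_erase]
  constructor
  · rintro ⟨j, rfl⟩
    by_cases hj : j = i
    · subst hj; simp
    · exact Or.inr ⟨by simpa [hj] using hx.ne hj, j, by simp [hj]⟩
  · rintro (rfl | ⟨hai, j, rfl⟩)
    · exact ⟨i, by simp⟩
    · exact ⟨j, by rw [update_of_ne (by rintro rfl; exact hai rfl)]⟩

theorem SpansClique.exists_superset_erase {α : Type*} [DecidableEq α] {H : Finset (Finset α)}
    {r : ℕ} {S : Finset α} (hS : SpansClique (shadowU H (r - 1)) r S) {s : α} (hs : s ∈ S) :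
    ∃ e ∈ H, S.erase s ⊆ e := by
  have hf : S.erase s ∈ S.powersetCard (r - 1) :=
    mem_powersetCard.2 ⟨erase_subset s S, by rw [card_erase_of_mem hs, hS.1]⟩
  obtain ⟨e, he, hse⟩ := mem_biUnion.1 (hS.2 _ hf)
  exact ⟨e, he, (mem_powersetCard.1 hse).1⟩

namespace PartiteHypergraph

variable {ι α : Type*} {V : ι → Finset α}

theorem injective_of_forall_mem (hV : Pairwise (Disjoint on V)) {x : ι → α}
    (hx : ∀ i, x i ∈ V i) : Injective x := by
  intro i j hij
  by_contra hne
  exact disjoint_left.1 (hV hne) (hx i) (hij ▸ hx j)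

variable [Fintype ι] [DecidableEq α]

theorem apply_eq_of_mem_image (hV : Pairwise (Disjoint on V)) {x : ι → α}
    (hx : ∀ i, x i ∈ V i) {a : α} {j : ι} (ha : a ∈ V j) (hax : a ∈ univ.image x) :
    x j = a := by
  obtain ⟨k, -, rfl⟩ := mem_image.1 hax
  by_contra hne
  exact disjoint_left.1 (hV fun hkj => hne (congrArg x hkj.symm)) (hx k) ha

theorem exists_image_eq_of_card_inter_eq_one (hV : Pairwise (Disjoint on V)) {e : Finset α}
    (he : ∀ i, (e ∩ V i).card = 1) (hcard : e.card = Fintype.card ι) :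
    ∃ x : ι → α, (∀ i, x i ∈ V i) ∧ univ.image x = e := by
  choose x hx using fun i => card_pos.1 (by rw [he i]; exact one_pos)
  have hxV : ∀ i, x i ∈ V i := fun i => (mem_inter.1 (hx i)).2
  refine ⟨x, hxV, eq_of_subset_of_card_le ?_ ?_⟩
  · exact image_subset_iff.2 fun i _ => (mem_inter.1 (hx i)).1
  · rw [hcard, card_image_of_injective _ (injective_of_forall_mem hV hxV), card_univ]

theorem card_inter_eq_one_of_card_inter_le_one (hV : Pairwise (Disjoint on V)) {S : Finset α}
    (hcover : ∀ a ∈ S, ∃ i, a ∈ V i) (hle : ∀ i, (S ∩ V i).card ≤ 1)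
    (hcard : S.card = Fintype.card ι) (i : ι) : (S ∩ V i).card = 1 := by
  have hS : univ.biUnion (fun i => S ∩ V i) = S := by
    ext a
    simp only [mem_biUnion, mem_univ, true_and, mem_inter]
    exact ⟨fun ⟨_, ha, _⟩ => ha, fun ha => (hcover a ha).imp fun _ hai => ⟨ha, hai⟩⟩
  have hsum : ∑ i, (S ∩ V i).card = ∑ _i : ι, 1 := by
    rw [← card_biUnion, hS, hcard, sum_const, card_univ, smul_eq_mul, mul_one]
    exact fun i _ j _ hij => (hV hij).mono inter_subset_right inter_subset_right
  exact (sum_eq_sum_iff_of_le fun i _ => hle i).1 hsum i (mem_univ i)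

variable {H : Finset (Finset α)}

theorem exists_image_eq_of_spansClique (hr : 3 ≤ Fintype.card ι)
    (hV : Pairwise (Disjoint on V)) (hcard : ∀ e ∈ H, e.card = Fintype.card ι)
    (hpart : ∀ e ∈ H, ∀ i, (e ∩ V i).card = 1) {S : Finset α}
    (hS : SpansClique (shadowU H (Fintype.card ι - 1)) (Fintype.card ι) S) :
    ∃ x : ι → α, (∀ i, x i ∈ V i) ∧ univ.image x = S := by
  have hedge : ∀ s ∈ S, ∃ z : ι → α, (∀ i, z i ∈ V i) ∧ S.erase s ⊆ univ.image z := by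
    intro s hs
    obtain ⟨e, he, hse⟩ := hS.exists_superset_erase hs
    obtain ⟨z, hz, rfl⟩ := exists_image_eq_of_card_inter_eq_one hV (hpart e he) (hcard e he)
    exact ⟨z, hz, hse⟩
  have hS3 : 3 ≤ S.card := hS.1 ▸ hr
  have hcover : ∀ a ∈ S, ∃ i, a ∈ V i := by
    intro a ha
    obtain ⟨s, hs, hsa⟩ := exists_mem_ne (show 1 < S.card by omega) a
    obtain ⟨z, hz, hsz⟩ := hedge s hs
    obtain ⟨i, -, rfl⟩ := mem_image.1 (hsz (mem_erase.2 ⟨hsa.symm, ha⟩))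
    exact ⟨i, hz i⟩
  have hle : ∀ i, (S ∩ V i).card ≤ 1 := by
    refine fun i => card_le_one.2 fun a ha b hb => ?_
    rw [mem_inter] at ha hb
    obtain ⟨s, hs⟩ : ((S.erase a).erase b).Nonempty := by
      rw [← card_pos]
      have := pred_card_le_card_erase (s := S.erase a) (a := b)
      have := pred_card_le_card_erase (s := S) (a := a)
      omega
    obtain ⟨hsb, hsa, hsS⟩ : s ≠ b ∧ s ≠ a ∧ s ∈ S := by simpa only [mem_erase] using hs
    obtain ⟨z, hz, hsz⟩ := hedge s hsS
    rw [← apply_eq_of_mem_image hV hz ha.2 (hsz (mem_erase.2 ⟨hsa.symm, ha.1⟩)),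
      apply_eq_of_mem_image hV hz hb.2 (hsz (mem_erase.2 ⟨hsb.symm, hb.1⟩))]
  exact exists_image_eq_of_card_inter_eq_one hV
    (card_inter_eq_one_of_card_inter_le_one hV hcover hle hS.1) hS.1

theorem mem_of_spansClique (hr : 3 ≤ Fintype.card ι) (hV : Pairwise (Disjoint on V))
    (hcard : ∀ e ∈ H, e.card = Fintype.card ι) (hpart : ∀ e ∈ H, ∀ i, (e ∩ V i).card = 1)
    (h2 : ∀ x y : ι → α, (∀ i, x i ∈ V i) → (∀ i, y i ∈ V i) → (∀ i, x i ≠ y i) →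
      ∃ i, insert (y i) ((univ.image x).erase (x i)) ∉ H) {S : Finset α}
    (hS : SpansClique (shadowU H (Fintype.card ι - 1)) (Fintype.card ι) S) : S ∈ H := by
  classical
  obtain ⟨x, hx, rfl⟩ := exists_image_eq_of_spansClique hr hV hcard hpart hS
  have hxinj := injective_of_forall_mem hV hx
  by_contra hxH
  have hswap : ∀ i, ∃ y ∈ V i, y ≠ x i ∧ univ.image (update x i y) ∈ H := by
    intro i
    obtain ⟨e, he, hxe⟩ := hS.exists_superset_erase (mem_image_of_mem x (mem_univ i))
    obtain ⟨z, hz, rfl⟩ := exists_image_eq_of_card_inter_eq_one hV (hpart e he) (hcard e he)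
    have hzx : update x i (z i) = z := update_eq_iff.2 ⟨rfl, fun j hji =>
      (apply_eq_of_mem_image hV hz (hx j)
        (hxe (mem_erase.2 ⟨hxinj.ne hji, mem_image_of_mem x (mem_univ j)⟩))).symm⟩
    refine ⟨z i, hz i, fun hzi => hxH ?_, by rwa [hzx]⟩
    rwa [← hzx, hzi, update_eq_self] at he
  choose y hyV hyx hyH using hswap
  obtain ⟨i, hi⟩ := h2 x y hx hyV fun i => (hyx i).symm
  exact hi (image_update_univ hxinj i (y i) ▸ hyH i)

theorem spansClique_image_of_forall_image_mem {ℓ : ℕ} {W : Fin ℓ → Finset α}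
    (hW : Pairwise (Disjoint on W)) {G : Finset (Finset α)}
    (hG : ∀ T : Finset (Fin ℓ), T.card = ℓ - 1 → ∀ g : Fin ℓ → α, (∀ i ∈ T, g i ∈ W i) →
      T.image g ∈ G)
    {g : Fin ℓ → α} (hg : ∀ i, g i ∈ W i) : SpansClique G ℓ (univ.image g) := by
  have hginj := injective_of_forall_mem hW hg
  refine ⟨by rw [card_image_of_injective _ hginj, card_univ, Fintype.card_fin], fun f hf => ?_⟩
  obtain ⟨hfg, hfcard⟩ := mem_powersetCard.1 hf
  obtain ⟨T, -, rfl⟩ := subset_image_iff.1 hfg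
  exact hG T (by rwa [card_image_of_injective _ hginj] at hfcard) g fun i _ => hg i

theorem not_containsCMP_of_forall_spansClique_mem {r : ℕ} (hr : 1 ≤ r) {G : Finset (Finset α)} (hclique : ∀ S, SpansClique G r S → S ∈ H)
    (h1 : ∀ f : Finset α, f.card = r - 1 → (H.filter fun e => f ⊆ e).card ≤ 1) :
    ¬ ContainsCMP G (r - 1) r (fun i => if (i : ℕ) = r - 1 then 2 else 1) := by
  rintro ⟨W, hW, hWcard, hWG⟩
  replace hW : Pairwise (Disjoint on W) := fun i j => hW i j
  let k : Fin r := ⟨r - 1, by omega⟩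
  obtain ⟨a, b, hab, hWk⟩ := (card_eq_two (s := W k)).1 (by simpa [k] using hWcard k)
  choose v hv using fun i => card_pos.1 (by simp only [hWcard i]; split_ifs <;> norm_num :
    0 < (W i).card)
  have hupdate : ∀ c ∈ W k, ∀ i, update v k c i ∈ W i := fun c hc =>
    (forall_update_iff v fun i x => x ∈ W i).2 ⟨hc, fun i _ => hv i⟩
  set f := (univ.erase k).image v
  have hfcard : f.card = r - 1 := by
    rw [card_image_of_injective _ (injective_of_forall_mem hW hv), card_erase_of_mem (mem_univ k),
      card_univ, Fintype.card_fin]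
  have hmem : ∀ c ∈ W k, univ.image (update v k c) ∈ H.filter fun e => f ⊆ e := by
    refine fun c hc => mem_filter.2 ⟨hclique _ (spansClique_image_of_forall_image_mem hW hWG
      (hupdate c hc)), image_subset_iff.2 fun i hi => mem_image.2 ⟨i, mem_univ i, ?_⟩⟩
    exact update_of_ne (ne_of_mem_erase hi) c v
  have ha : a ∈ W k := hWk ▸ mem_insert_self a {b}
  have hb : b ∈ W k := hWk ▸ mem_insert_of_mem (mem_singleton_self b)
  have heq := card_le_one.1 (h1 f hfcard) _ (hmem a ha) _ (hmem b hb)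
  have hba := apply_eq_of_mem_image hW (hupdate b hb) ha
    (heq ▸ mem_image.2 ⟨k, mem_univ k, update_self k a v⟩)
  exact hab ((update_self k b v).symm.trans hba).symm

end PartiteHypergraph

theorem stmt9_general {α : Type*} [DecidableEq α] {r : ℕ} (hr : 3 ≤ r)
    (V : Fin r → Finset α) (hdisj : ∀ i j, i ≠ j → Disjoint (V i) (V j))
    (H : Finset (Finset α)) (hcard : ∀ e ∈ H, e.card = r)
    (hpart : ∀ e ∈ H, ∀ i, (e ∩ V i).card = 1)
    (h1 : ∀ f : Finset α, f.card = r - 1 → (H.filter fun e => f ⊆ e).card ≤ 1)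
    (h2 : ∀ x y : Fin r → α, (∀ i, x i ∈ V i) → (∀ i, y i ∈ V i) →
      (∀ i, x i ≠ y i) →
      ∃ i, insert (y i) ((Finset.image x Finset.univ).erase (x i)) ∉ H) :
    (∀ S : Finset α, SpansClique (shadowU H (r - 1)) r S → S ∈ H) ∧
    ¬ ContainsCMP (shadowU H (r - 1)) (r - 1) r
        (fun i => if (i : ℕ) = r - 1 then 2 else 1) := by
  have hclique : ∀ S, SpansClique (shadowU H (r - 1)) r S → S ∈ H := fun S hS =>
    PartiteHypergraph.mem_of_spansClique (by simpa using hr) (fun i j => hdisj i j)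
      (by simpa using hcard) hpart h2 (by simpa using hS)
  exact ⟨hclique,
    PartiteHypergraph.not_containsCMP_of_forall_spansClique_mem (by omega) hclique h1⟩

theorem stmt9 {α : Type*} [DecidableEq α] [Fintype α] {r : ℕ} (hr : 3 ≤ r)
    (V : Fin r → Finset α) (hdisj : ∀ i j, i ≠ j → Disjoint (V i) (V j))
    (H : Finset (Finset α)) (hcard : ∀ e ∈ H, e.card = r)
    (hpart : ∀ e ∈ H, ∀ i, (e ∩ V i).card = 1)
    (h1 : ∀ f : Finset α, f.card = r - 1 → (H.filter fun e => f ⊆ e).card ≤ 1)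
    (h2 : ∀ x y : Fin r → α, (∀ i, x i ∈ V i) → (∀ i, y i ∈ V i) →
      (∀ i, x i ≠ y i) →
      ∃ i, insert (y i) ((Finset.image x Finset.univ).erase (x i)) ∉ H) :
    (∀ S : Finset α, SpansClique (shadowU H (r - 1)) r S → S ∈ H) ∧
    ¬ ContainsCMP (shadowU H (r - 1)) (r - 1) r
        (fun i => if (i : ℕ) = r - 1 then 2 else 1) :=
  stmt9_general hr V hdisj H hcard hpart h1 h2
end

section
/- Let ℓ ≥ r ≥ 3, let F be an (r−1)-uniform hypergraph on vertices v₁,…,v_ℓ, let G be an (r−1)-uniform hypergraph with a vertex partition W₁ ⊔ ⋯ ⊔ W_ℓ, and let 𝓗 be the ℓ-partite (ℓ−1)-uniform auxiliary hypergraph whose edges are the crossing (ℓ−1)-tuples (x_j)_{j∈[ℓ]∖{i}} that extend (by some x_i ∈ W_i) to an aligned copy of F in G. Suppose 𝓗 contains a copy of K_ℓ^(ℓ−1)(a,…,a) with parts U_i ⊆ W_i, |U_i| = a. Then for every (x₁,…,x_ℓ) ∈ U₁ × ⋯ × U_ℓ and every edge {v_{i₁},…,v_{i_{r−1}}} of F,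 the set {x_{i₁},…,x_{i_{r−1}}} is an edge of G; consequently G contains a copy of the blowup F(a). -/
/-!
Every edge of `F` has `r - 1 < ℓ` vertices, so it misses some index `i`. Dropping the `i`-th
coordinate of a transversal `x` gives a crossing `(ℓ-1)`-tuple of `K_ℓ^(ℓ-1)(a,…,a)`, which
extends to an aligned copy of `F`; that copy changes only the `i`-th coordinate, so it agrees
with `x` on the edge. Hence the parts `U i` themselves span the blowup `F(a)`.
-/

/-- `G` contains a copy of the blowup `F(a)` of the hypergraph `F` on vertex set `Fin ℓ`:
disjoint sets `V i` of size `a`, one for each vertex of `F`, such that every transversal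
of an edge of `F` is an edge of `G`. -/
def ContainsBlowup {α : Type*} [DecidableEq α] {ℓ : ℕ} (G : Finset (Finset α))
    (F : Finset (Finset (Fin ℓ))) (a : ℕ) : Prop :=
  ∃ V : Fin ℓ → Finset α,
    (∀ i j, i ≠ j → Disjoint (V i) (V j)) ∧ (∀ i, (V i).card = a) ∧
    ∀ x : Fin ℓ → α, (∀ i, x i ∈ V i) → ∀ e ∈ F, e.image x ∈ G

open Finset Function

section

variable {ι α : Type*} [DecidableEq ι] [DecidableEq α]

theorem Finset.image_update_of_notMem {e : Finset ι} {i : ι} (hi : i ∉ e) (x : ι → α) (y : α) :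
    e.image (update x i y) = e.image x :=
  image_congr fun _ hj => update_of_ne (ne_of_mem_of_not_mem hj hi) _ _

theorem image_mem_of_forall_exists_update {F : Finset (Finset ι)}
    {G : Finset (Finset α)} {U : ι → Finset α}
    (hext : ∀ i : ι, ∀ g : ι → α, (∀ j, j ≠ i → g j ∈ U j) →
      ∃ y, ∀ e ∈ F, e.image (update g i y) ∈ G)
    {x : ι → α} (hx : ∀ i, x i ∈ U i) {e : Finset ι} (he : e ∈ F) {i : ι} (hi : i ∉ e) :
    e.image x ∈ G := by
  obtain ⟨y, hy⟩ := hext i x fun j _ => hx j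
  simpa only [image_update_of_notMem hi] using hy e he

end

theorem stmt11_general {α : Type*} [DecidableEq α] {r ℓ a : ℕ}
    (hr : 3 ≤ r) (hℓ : r ≤ ℓ)
    (F : Finset (Finset (Fin ℓ))) (hF : ∀ e ∈ F, e.card = r - 1)
    (G : Finset (Finset α))
    (W : Fin ℓ → Finset α) (hW : ∀ i j, i ≠ j → Disjoint (W i) (W j))
    (U : Fin ℓ → Finset α) (hUW : ∀ i, U i ⊆ W i) (hU : ∀ i, (U i).card = a)
    -- the auxiliary hypergraph 𝓗 contains `K_ℓ^(ℓ-1)(a,…,a)` with parts `U i ⊆ W i`: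
    -- every crossing `(ℓ-1)`-tuple from the `U j`, `j ≠ i`, extends by some `x_i ∈ W i`
    -- to an aligned copy of `F` in `G`
    (hH : ∀ i : Fin ℓ, ∀ g : Fin ℓ → α, (∀ j, j ≠ i → g j ∈ U j) →
      ∃ xi ∈ W i, ∀ e ∈ F, e.image (Function.update g i xi) ∈ G) :
    (∀ x : Fin ℓ → α, (∀ i, x i ∈ U i) → ∀ e ∈ F, e.image x ∈ G) ∧
    ContainsBlowup G F a := by
  have transversal : ∀ x : Fin ℓ → α, (∀ i, x i ∈ U i) → ∀ e ∈ F, e.image x ∈ G := by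
    intro x hx e he
    have hcard : #e < #(univ : Finset (Fin ℓ)) := by
      rw [card_univ, Fintype.card_fin, hF e he]
      omega
    obtain ⟨i, -, hi⟩ := exists_mem_notMem_of_card_lt_card hcard
    exact image_mem_of_forall_exists_update (fun i g hg => (hH i g hg).imp fun _ => And.right)
      hx he hi
  exact ⟨transversal, U, fun i j hij => (hW i j hij).mono (hUW i) (hUW j), hU, transversal⟩

theorem stmt11 {α : Type*} [DecidableEq α] {r ℓ a : ℕ}
    (hr : 3 ≤ r) (hℓ : r ≤ ℓ) (ha : 1 ≤ a)
    (F : Finset (Finset (Fin ℓ))) (hF : ∀ e ∈ F, e.card = r - 1)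
    (G : Finset (Finset α)) (hG : ∀ e ∈ G, e.card = r - 1)
    (W : Fin ℓ → Finset α) (hW : ∀ i j, i ≠ j → Disjoint (W i) (W j))
    (U : Fin ℓ → Finset α) (hUW : ∀ i, U i ⊆ W i) (hU : ∀ i, (U i).card = a)
    -- the auxiliary hypergraph 𝓗 contains `K_ℓ^(ℓ-1)(a,…,a)` with parts `U i ⊆ W i`:
    -- every crossing `(ℓ-1)`-tuple from the `U j`, `j ≠ i`, extends by some `x_i ∈ W i`
    -- to an aligned copy of `F` in `G`
    (hH : ∀ i : Fin ℓ, ∀ g : Fin ℓ → α, (∀ j, j ≠ i → g j ∈ U j) →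
      ∃ xi ∈ W i, ∀ e ∈ F, e.image (Function.update g i xi) ∈ G) :
    (∀ x : Fin ℓ → α, (∀ i, x i ∈ U i) → ∀ e ∈ F, e.image x ∈ G) ∧
    ContainsBlowup G F a :=
  stmt11_general hr hℓ F hF G W hW U hUW hU hH
end

section
/- For every r ≥ 3 and integers 1 ≤ a₁ ≤ ⋯ ≤ a_r, ex(n, K_r^(r−1), K_r^(r−1)(a₁,…,a_r)) ≥ ⌊n/r⌋ · ex(⌈(r−1)n/r⌉, K_{r−1}^(r−1)(a₁,…,a_{r−1})), where ex(m, F) denotes the Turán number (maximum number of edges in an F-free (r−1)-uniform hypergraph on m vertices) and ex(n, T, F) the generalized Turán number (maximum number of copies of T in an F-free hypergraph on n vertices). -/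
/-- The number of copies of `K_r^(r-1)` in the `(r-1)`-uniform hypergraph `G`. -/
def cliqueCount {α : Type*} [DecidableEq α] [Fintype α]
    (G : Finset (Finset α)) (r : ℕ) : ℕ :=
  ((Finset.univ.powersetCard r).filter fun S => ∀ f ∈ S.powersetCard (r - 1), f ∈ G).card

/-- The generalized Turán number `ex(m, K_r^(r-1), K_r^(r-1)(c))`: the maximum number of
copies of `K_r^(r-1)` over all `K_r^(r-1)(c)`-free `(r-1)`-uniform hypergraphs on `m`
vertices. -/
noncomputable def exCliques (m r : ℕ) (c : Fin r → ℕ) : ℕ :=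
  sSup {k | ∃ G : Finset (Finset (Fin m)), (∀ e ∈ G, e.card = r - 1) ∧
    ¬ ContainsCMP G (r - 1) r c ∧ cliqueCount G r = k}

/-- The Turán number `ex(m, K_ℓ^(t)(c))`: the maximum number of edges in a
`K_ℓ^(t)(c)`-free `t`-uniform hypergraph on `m` vertices. -/
noncomputable def exTuran (m t ℓ : ℕ) (c : Fin ℓ → ℕ) : ℕ :=
  sSup {k | ∃ G : Finset (Finset (Fin m)), (∀ e ∈ G, e.card = t) ∧
    ¬ ContainsCMP G t ℓ c ∧ G.card = k}

open Finset

section CMPCopy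

variable {α β : Type*} [DecidableEq α] [DecidableEq β]

structure IsCMPCopy (G : Finset (Finset α)) (t : ℕ) {ℓ : ℕ} (V : Fin ℓ → Finset α) : Prop where
  disjoint : ∀ i j, i ≠ j → Disjoint (V i) (V j)
  image_mem : ∀ S : Finset (Fin ℓ), #S = t → ∀ g : Fin ℓ → α, (∀ i ∈ S, g i ∈ V i) → S.image g ∈ G

theorem containsCMP_iff {G : Finset (Finset α)} {t ℓ : ℕ} {c : Fin ℓ → ℕ} :
    ContainsCMP G t ℓ c ↔ ∃ V : Fin ℓ → Finset α, IsCMPCopy G t V ∧ ∀ i, #(V i) = c i :=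
  ⟨fun ⟨V, hdisj, hcard, hmem⟩ => ⟨V, ⟨hdisj, hmem⟩, hcard⟩,
    fun ⟨V, ⟨hdisj, hmem⟩, hcard⟩ => ⟨V, hdisj, hcard, hmem⟩⟩

theorem not_containsCMP_empty {t ℓ : ℕ} {c : Fin ℓ → ℕ} (hc : ∀ i, 1 ≤ c i) (ht : t ≤ ℓ) :
    ¬ ContainsCMP (∅ : Finset (Finset α)) t ℓ c := by
  rintro ⟨V, -, hcard, hmem⟩
  have hne : ∀ i, (V i).Nonempty := fun i => card_pos.mp (by rw [hcard]; exact hc i)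
  choose v hv using hne
  obtain ⟨S, -, hS⟩ := exists_subset_card_eq (show t ≤ #(univ : Finset (Fin ℓ)) by simpa)
  simpa using hmem S hS v fun i _ => hv i

namespace IsCMPCopy

variable {G : Finset (Finset α)} {t ℓ : ℕ} {V : Fin ℓ → Finset α}

theorem mono {W : Fin ℓ → Finset α} (hV : IsCMPCopy G t V) (hW : ∀ i, W i ⊆ V i) :
    IsCMPCopy G t W where
  disjoint i j hij := (hV.disjoint i j hij).mono (hW i) (hW j)
  image_mem S hS g hg := hV.image_mem S hS g fun i hi => hW i (hg i hi)

theorem comp_embedding [Nonempty α] {k : ℕ} (hV : IsCMPCopy G t V) (e : Fin k ↪ Fin ℓ) :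
    IsCMPCopy G t (V ∘ e) where
  disjoint i j hij := hV.disjoint (e i) (e j) (e.injective.ne hij)
  image_mem S hS g hg := by
    let g' := Function.extend e g fun _ => Classical.arbitrary α
    have hg' : ∀ i, g' (e i) = g i := e.injective.extend_apply g _
    have hmem := hV.image_mem (S.map e) (by rw [card_map, hS]) g' <| by
      simp only [mem_map]
      rintro _ ⟨i, hi, rfl⟩
      exact hg' i ▸ hg i hi
    rwa [map_eq_image, image_image, show g' ∘ e = g from funext hg'] at hmem

theorem of_forall_disjoint {A : Finset α} {G' : Finset (Finset α)} (hV : IsCMPCopy G t V)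
    (hVA : ∀ i, Disjoint (V i) A) (hG : ∀ e ∈ G, Disjoint e A → e ∈ G') :
    IsCMPCopy G' t V where
  disjoint := hV.disjoint
  image_mem S hS g hg := by
    refine hG _ (hV.image_mem S hS g hg) (disjoint_left.mpr ?_)
    simp only [mem_image]
    rintro _ ⟨i, hi, rfl⟩
    exact disjoint_left.mp (hVA i) (hg i hi)

theorem of_map {H : Finset (Finset β)} {W : Fin ℓ → Finset β} (f : β ↪ α)
    (hW : IsCMPCopy (H.map (mapEmbedding f).toEmbedding) t fun i => (W i).map f) : IsCMPCopy H t W where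
  disjoint i j hij := (disjoint_map f).mp (hW.disjoint i j hij)
  image_mem S hS g hg := by
    have hmem := hW.image_mem S hS (f ∘ g) fun i hi => mem_map_of_mem f (hg i hi)
    rw [← image_image, ← map_eq_image] at hmem
    exact (mem_map' (mapEmbedding f).toEmbedding).mp hmem

theorem exists_mem_mem_of_ne (hV : IsCMPCopy G t V) (hne : ∀ i, (V i).Nonempty)
    (ht : 2 ≤ t) (htℓ : t ≤ ℓ) {i j : Fin ℓ} (hij : i ≠ j) {x y : α}
    (hx : x ∈ V i) (hy : y ∈ V j) : ∃ e ∈ G, x ∈ e ∧ y ∈ e := by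
  choose v hv using hne
  obtain ⟨S, hijS, -, hS⟩ := exists_subsuperset_card_eq (subset_univ {i, j})
    ((card_le_two).trans ht) (by simpa using htℓ)
  let g := Function.update (Function.update v i x) j y
  have hgi : g i = x := by simp [g, Function.update_of_ne hij]
  have hgj : g j = y := by simp [g]
  refine ⟨S.image g, hV.image_mem S hS g fun k _ => ?_, ?_, ?_⟩
  · by_cases hkj : k = j
    · subst hkj; rwa [hgj]
    by_cases hki : k = i
    · subst hki; rwa [hgi]
    simpa [g, hki, hkj] using hv k
  · exact hgi ▸ mem_image_of_mem g (hijS (by simp))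
  · exact hgj ▸ mem_image_of_mem g (hijS (by simp))

theorem exists_forall_ne_disjoint {V : Fin (ℓ + 1) → Finset α} (hV : IsCMPCopy G t V)
    (hne : ∀ i, (V i).Nonempty) (ht : 2 ≤ t) (htℓ : t ≤ ℓ + 1) {A : Finset α}
    (hGA : ∀ e ∈ G, #(e ∩ A) ≤ 1) : ∃ i₀, ∀ j, j ≠ i₀ → Disjoint (V j) A := by
  by_cases hmeet : ∃ i, ¬ Disjoint (V i) A
  · obtain ⟨i₀, hi₀⟩ := hmeet
    refine ⟨i₀, fun j hj => by_contra fun hjA => ?_⟩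
    obtain ⟨x, hxi, hxA⟩ := not_disjoint_iff.mp hi₀
    obtain ⟨y, hyj, hyA⟩ := not_disjoint_iff.mp hjA
    obtain ⟨e, he, hxe, hye⟩ := hV.exists_mem_mem_of_ne hne ht htℓ hj.symm hxi hyj
    have hxy : x ≠ y := fun h => disjoint_left.mp (hV.disjoint i₀ j hj.symm) hxi (h ▸ hyj)
    have : 1 < #(e ∩ A) :=
      one_lt_card.mpr ⟨x, mem_inter.mpr ⟨hxe, hxA⟩, y, mem_inter.mpr ⟨hye, hyA⟩, hxy⟩
    exact absurd (hGA e he) (by omega)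
  · push Not at hmeet
    exact ⟨0, fun j _ => hmeet j⟩

end IsCMPCopy

end CMPCopy

section ApexJoin

variable {α β : Type*} {A : Finset α} {f : β ↪ α}

theorem disjoint_map_of_forall_notMem (hfA : ∀ y, f y ∉ A) (e₀ : Finset β) :
    Disjoint (e₀.map f) A := by
  simp only [disjoint_left, mem_map]
  rintro _ ⟨y, -, rfl⟩
  exact hfA y

variable [Fintype α] [DecidableEq α]

/-- The paper's construction, with `A` the apex class and `B` the range of `f`. -/
def apexJoin (s : ℕ) (A : Finset α) (f : β ↪ α) (H : Finset (Finset β)) : Finset (Finset α) :=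
  H.map (mapEmbedding f).toEmbedding ∪ {e ∈ (univ : Finset α).powersetCard s | #(e ∩ A) = 1}

variable {s : ℕ} {H : Finset (Finset β)} {e : Finset α}

theorem mem_apexJoin :
    e ∈ apexJoin s A f H ↔ (∃ e₀ ∈ H, e₀.map f = e) ∨ (#e = s ∧ #(e ∩ A) = 1) := by
  simp [apexJoin]

theorem card_of_mem_apexJoin (hH : ∀ e₀ ∈ H, #e₀ = s) (he : e ∈ apexJoin s A f H) : #e = s := by
  rcases mem_apexJoin.mp he with ⟨e₀, he₀, rfl⟩ | ⟨hcard, -⟩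
  · rw [card_map, hH e₀ he₀]
  · exact hcard

theorem card_inter_le_one_of_mem_apexJoin (hfA : ∀ y, f y ∉ A) (he : e ∈ apexJoin s A f H) :
    #(e ∩ A) ≤ 1 := by
  rcases mem_apexJoin.mp he with ⟨e₀, -, rfl⟩ | ⟨-, hA⟩
  · simp [disjoint_iff_inter_eq_empty.mp (disjoint_map_of_forall_notMem hfA e₀)]
  · exact hA.le

theorem mem_map_of_mem_apexJoin (he : e ∈ apexJoin s A f H) (heA : Disjoint e A) :
    e ∈ H.map (mapEmbedding f).toEmbedding := by
  rcases mem_apexJoin.mp he with ⟨e₀, he₀, rfl⟩ | ⟨-, hA⟩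
  · exact mem_map_of_mem _ he₀
  · simp [disjoint_iff_inter_eq_empty.mp heA] at hA

theorem not_containsCMP_apexJoin [DecidableEq β] (hfA : ∀ y, f y ∉ A) (hAf : ∀ x ∉ A, ∃ y, f y = x)
    (hs : 2 ≤ s) {c : Fin (s + 1) → ℕ} {c' : Fin s → ℕ} (hc : ∀ i, 1 ≤ c i)
    (hcc' : ∀ (i : Fin (s + 1)) k, c' k ≤ c (i.succAbove k)) (hH : ¬ ContainsCMP H s s c') :
    ¬ ContainsCMP (apexJoin s A f H) s (s + 1) c := by
  rw [containsCMP_iff]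
  rintro ⟨V, hV, hcard⟩
  have hne : ∀ i, (V i).Nonempty := fun i => card_pos.mp (by rw [hcard]; exact hc i)
  have : Nonempty α := ⟨(hne 0).choose⟩
  obtain ⟨i₀, hi₀⟩ := hV.exists_forall_ne_disjoint hne hs (by omega)
    fun e he => card_inter_le_one_of_mem_apexJoin hfA he
  choose W hWV hWcard using fun k => exists_subset_card_eq <|
    (hcc' i₀ k).trans (hcard (i₀.succAbove k)).ge
  have hWA : ∀ k, Disjoint (W k) A := fun k =>
    (hi₀ _ (Fin.succAbove_ne i₀ k)).mono_left (hWV k)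
  have hWf : ∀ k, ∃ W₀ : Finset β, W k = W₀.map f := fun k => by
    obtain ⟨W₀, -, hW₀⟩ := (subset_set_image_iff (s := Set.univ) (f := f)).mp fun x hx => by
      obtain ⟨y, rfl⟩ := hAf x (disjoint_left.mp (hWA k) hx)
      exact Set.mem_image_of_mem f trivial
    exact ⟨W₀, by rw [map_eq_image, hW₀]⟩
  choose W₀ hW₀ using hWf
  have hW : IsCMPCopy (apexJoin s A f H) s W :=
    (hV.comp_embedding (Fin.succAboveEmb i₀)).mono hWV
  refine hH (containsCMP_iff.mpr ⟨W₀, IsCMPCopy.of_map f ?_, fun k => ?_⟩)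
  · simp only [← hW₀]
    exact hW.of_forall_disjoint hWA fun e he heA => mem_map_of_mem_apexJoin he heA
  · rw [← card_map f, ← hW₀, hWcard]

theorem insert_map_mem_cliques (hfA : ∀ y, f y ∉ A) {x : α} (hx : x ∈ A) {e₀ : Finset β}
    (he₀ : e₀ ∈ H) (hcard : #e₀ = s) :
    ∀ F ∈ (insert x (e₀.map f)).powersetCard s, F ∈ apexJoin s A f H := by
  intro F hF
  obtain ⟨hFsub, hFcard⟩ := mem_powersetCard.mp hF
  have hdisj := disjoint_map_of_forall_notMem hfA e₀
  by_cases hxF : x ∈ F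
  · refine mem_apexJoin.mpr (Or.inr ⟨hFcard, ?_⟩)
    suffices F ∩ A = {x} by rw [this, card_singleton]
    refine eq_singleton_iff_unique_mem.mpr ⟨mem_inter.mpr ⟨hxF, hx⟩, fun y hy => ?_⟩
    obtain ⟨hyF, hyA⟩ := mem_inter.mp hy
    rcases mem_insert.mp (hFsub hyF) with rfl | hye
    · rfl
    · exact absurd hyA (disjoint_left.mp hdisj hye)
  · have : F = e₀.map f := eq_of_subset_of_card_le
      ((subset_insert_iff_of_notMem hxF).mp hFsub) (by rw [card_map, hcard, hFcard])
    exact this ▸ mem_apexJoin.mpr (Or.inl ⟨e₀, he₀, rfl⟩)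

theorem card_mul_card_le_cliqueCount_apexJoin (hfA : ∀ y, f y ∉ A) (hH : ∀ e₀ ∈ H, #e₀ = s) :
    #A * #H ≤ cliqueCount (apexJoin s A f H) (s + 1) := by
  rw [← card_product]
  refine card_le_card_of_injOn (fun p => insert p.1 (p.2.map f)) ?_ ?_
  · rintro ⟨x, e₀⟩ hp
    obtain ⟨hx, he₀⟩ := mem_product.mp hp
    have hxe : x ∉ e₀.map f := disjoint_right.mp (disjoint_map_of_forall_notMem hfA e₀) hx
    refine mem_filter.mpr ⟨mem_powersetCard.mpr ⟨subset_univ _, ?_⟩,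
      insert_map_mem_cliques hfA hx he₀ (hH e₀ he₀)⟩
    rw [card_insert_of_notMem hxe, card_map, hH e₀ he₀]
  · rintro ⟨x, e₀⟩ hp ⟨x', e₀'⟩ hp' heq
    obtain ⟨hx, -⟩ := mem_product.mp hp
    obtain ⟨hx', -⟩ := mem_product.mp hp'
    have hinter : ∀ y ∈ A, ∀ e : Finset β, insert y (e.map f) ∩ A = {y} := fun y hy e => by
      rw [insert_inter_of_mem hy,
        disjoint_iff_inter_eq_empty.mp (disjoint_map_of_forall_notMem hfA e), insert_empty]
    have hsdiff : ∀ y ∈ A, ∀ e : Finset β, insert y (e.map f) \ A = e.map f := fun y hy e => by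
      rw [insert_sdiff_of_mem _ hy, sdiff_eq_self_of_disjoint (disjoint_map_of_forall_notMem hfA e)]
    have hxx : x = x' := singleton_injective <| by
      rw [← hinter x hx e₀, ← hinter x' hx' e₀']
      exact congrArg (· ∩ A) heq
    have hee : e₀ = e₀' := map_injective f <| by
      rw [← hsdiff x hx e₀, ← hsdiff x' hx' e₀']
      exact congrArg (· \ A) heq
    rw [hxx, hee]

end ApexJoin

theorem exists_card_eq_exTuran {m t ℓ : ℕ} {c : Fin ℓ → ℕ} (hc : ∀ i, 1 ≤ c i) (ht : t ≤ ℓ) :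
    ∃ H : Finset (Finset (Fin m)),
      (∀ e ∈ H, #e = t) ∧ ¬ ContainsCMP H t ℓ c ∧ #H = exTuran m t ℓ c := by
  obtain ⟨H, hH, hfree, hcard⟩ := Nat.sSup_mem (s := {k | ∃ H : Finset (Finset (Fin m)),
      (∀ e ∈ H, #e = t) ∧ ¬ ContainsCMP H t ℓ c ∧ #H = k})
    ⟨0, ∅, by simp, not_containsCMP_empty hc ht, rfl⟩
    ⟨#((univ : Finset (Fin m)).powersetCard t), by
      rintro _ ⟨H, hH, -, rfl⟩
      exact card_le_card fun e he => mem_powersetCard.mpr ⟨subset_univ e, hH e he⟩⟩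
  exact ⟨H, hH, hfree, hcard⟩

theorem cliqueCount_le_exCliques {m r : ℕ} {c : Fin r → ℕ} {G : Finset (Finset (Fin m))}
    (hG : ∀ e ∈ G, #e = r - 1) (hfree : ¬ ContainsCMP G (r - 1) r c) :
    cliqueCount G r ≤ exCliques m r c :=
  le_csSup ⟨#((univ : Finset (Fin m)).powersetCard r), by
      rintro _ ⟨G', -, -, rfl⟩
      exact card_le_card (filter_subset _ _)⟩
    ⟨G, hG, hfree, rfl⟩

theorem mul_exTuran_le_exCliques_add (q m : ℕ) {s : ℕ} (hs : 2 ≤ s) {c : Fin (s + 1) → ℕ}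
    {c' : Fin s → ℕ} (hc : ∀ i, 1 ≤ c i) (hc' : ∀ k, 1 ≤ c' k)
    (hcc' : ∀ (i : Fin (s + 1)) k, c' k ≤ c (i.succAbove k)) :
    q * exTuran m s s c' ≤ exCliques (q + m) (s + 1) c := by
  obtain ⟨H, hH, hfree, hcard⟩ := exists_card_eq_exTuran (m := m) hc' le_rfl
  let A : Finset (Fin (q + m)) := univ.map (Fin.castAddEmb m)
  let f : Fin m ↪ Fin (q + m) := Fin.natAddEmb q
  have hfA : ∀ y, f y ∉ A := fun y h => by
    obtain ⟨x, -, hx⟩ := mem_map.mp h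
    have := congrArg Fin.val hx
    simp [f] at this
    omega
  have hAf : ∀ x ∉ A, ∃ y, f y = x := fun x hx => by
    induction x using Fin.addCases with
    | left x => exact absurd (mem_map_of_mem _ (mem_univ x)) hx
    | right y => exact ⟨y, rfl⟩
  calc q * exTuran m s s c' = #A * #H := by rw [card_map, card_univ, Fintype.card_fin, hcard]
    _ ≤ cliqueCount (apexJoin s A f H) (s + 1) := card_mul_card_le_cliqueCount_apexJoin hfA hH
    _ ≤ exCliques (q + m) (s + 1) c := cliqueCount_le_exCliques
        (fun _ he => card_of_mem_apexJoin hH he)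
        (not_containsCMP_apexJoin hfA hAf hs hc hcc' hfree)

theorem stmt16 {r n : ℕ} (hr : 3 ≤ r)
    (a : ℕ → ℕ) (ha1 : ∀ i, 1 ≤ i → i ≤ r → 1 ≤ a i)
    (hmono : ∀ i, 1 ≤ i → i < r → a i ≤ a (i + 1)) :
    (n / r) * exTuran (n - n / r) (r - 1) (r - 1) (fun i => a (i.val + 1)) ≤
      exCliques n r (fun i => a (i.val + 1)) := by
  obtain ⟨s, rfl⟩ : ∃ s, r = s + 1 := ⟨r - 1, by omega⟩
  have hsucc : ∀ (i : Fin (s + 1)) (k : Fin s), a (k.val + 1) ≤ a ((i.succAbove k).val + 1) := by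
    intro i k
    rcases lt_or_ge k.castSucc i with h | h
    · rw [Fin.succAbove_of_castSucc_lt i k h, Fin.val_castSucc]
    · rw [Fin.succAbove_of_le_castSucc i k h, Fin.val_succ]
      exact hmono (k + 1) (by omega) (by omega)
  have key := mul_exTuran_le_exCliques_add (n / (s + 1)) (n - n / (s + 1)) (by omega)
    (fun i => ha1 (i + 1) (by omega) (by omega)) (fun k => ha1 (k + 1) (by omega) (by omega))
    hsucc
  rwa [Nat.add_sub_cancel' (Nat.div_le_self n _)] at key
end

section
/- Let r ≥ 3, let G be an (r−1)-uniform hypergraph, and let 𝓘 be a collection of cliques K_r^(r−1) of G such that no a-element subset of 𝓘 consists of cliques sharing a common edge (where a ≥ 2). Then every edge of G is contained in fewer than a cliques of 𝓘, and hence G contains at least |𝓘|/(r(a−1)) pairwise edge-disjoint cliques K_r^(r−1). -/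
/-!
The first part is the hypothesis read contrapositively: `a` cliques through one edge would form
a forbidden `a`-set. For the second, take a maximal family `I₁ ⊆ I` of pairwise edge-disjoint
cliques. By maximality every clique of `I` shares an edge with a member of `I₁`; a member has
`r` edges, each lying in at most `a - 1` cliques of `I`, so `|I| ≤ r (a - 1) |I₁|`.
-/

open Finset

theorem Finset.exists_maximal_pairwise_subset {β : Type*} (I : Finset β) (R : β → β → Prop)
    [Std.Symm R] :
    ∃ J ⊆ I, (J : Set β).Pairwise R ∧ ∀ S ∈ I, ∃ T ∈ J, S = T ∨ ¬ R S T := by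
  classical
  obtain ⟨J, hJ, hmax⟩ :=
    (I.powerset.filter fun J : Finset β => (J : Set β).Pairwise R).exists_max_image card
      ⟨∅, by simp⟩
  rw [mem_filter, mem_powerset] at hJ
  refine ⟨J, hJ.1, hJ.2, fun S hS => ?_⟩
  by_cases hSJ : S ∈ J
  · exact ⟨S, hSJ, .inl rfl⟩
  by_contra! hfree
  have hins : (↑(insert S J) : Set β).Pairwise R := by
    rw [coe_insert, Set.pairwise_insert_of_symm]
    exact ⟨hJ.2, fun T hT _ => (hfree T hT).2⟩
  have := hmax (insert S J) (mem_filter.2 ⟨mem_powerset.2 (insert_subset hS hJ.1), hins⟩)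
  rw [card_insert_of_notMem hSJ] at this
  omega

section

variable {α : Type*} [DecidableEq α]

theorem card_filter_superset_lt {G I : Finset (Finset α)} {a : ℕ}
    (hA : ∀ T ⊆ I, T.card = a → ¬ ∃ e ∈ G, ∀ S ∈ T, e ⊆ S) {e : Finset α} (he : e ∈ G) :
    (I.filter (e ⊆ ·)).card < a := by
  by_contra! h
  obtain ⟨T, hT, rfl⟩ := exists_subset_card_eq h
  exact hA T (hT.trans (filter_subset _ _)) rfl ⟨e, he, fun S hS => (mem_filter.1 (hT hS)).2⟩

theorem card_le_card_mul_of_forall_exists_inter {I J : Finset (Finset α)} {r k m : ℕ}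
    (hJ : ∀ T ∈ J, T.card = r) (hcover : ∀ S ∈ I, ∃ T ∈ J, k ≤ (S ∩ T).card)
    (hdeg : ∀ T ∈ J, ∀ f ⊆ T, f.card = k → (I.filter (f ⊆ ·)).card ≤ m) :
    I.card ≤ J.card * (r.choose k * m) := by
  have hsub : I ⊆ J.biUnion fun T => (T.powersetCard k).biUnion fun f => I.filter (f ⊆ ·) := by
    intro S hS
    obtain ⟨T, hT, hk⟩ := hcover S hS
    obtain ⟨f, hf, rfl⟩ := exists_subset_card_eq hk
    simp only [mem_biUnion, mem_powersetCard, mem_filter]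
    exact ⟨T, hT, f, ⟨hf.trans inter_subset_right, rfl⟩, hS, hf.trans inter_subset_left⟩
  calc I.card ≤ _ := card_le_card hsub
    _ ≤ ∑ T ∈ J, ∑ f ∈ T.powersetCard k, (I.filter (f ⊆ ·)).card :=
        card_biUnion_le.trans (sum_le_sum fun _ _ => card_biUnion_le)
    _ ≤ ∑ T ∈ J, ∑ _f ∈ T.powersetCard k, m := by
        gcongr with T hT f hf
        rw [mem_powersetCard] at hf
        exact hdeg T hT f hf.1 hf.2
    _ = J.card * (r.choose k * m) := by
        refine sum_const_nat fun T hT => ?_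
        rw [sum_const, card_powersetCard, hJ T hT, smul_eq_mul]

end

theorem stmt17_general {α : Type*} [DecidableEq α] {r a : ℕ} (hr : 3 ≤ r) (ha : 2 ≤ a)
    (G : Finset (Finset α))
    (I : Finset (Finset α)) (hI : ∀ S ∈ I, SpansClique G r S)
    -- no `a`-element subset of `I` consists of cliques sharing a common edge
    (hA : ∀ T ⊆ I, T.card = a → ¬ ∃ e ∈ G, ∀ S ∈ T, e ⊆ S) :
    (∀ e ∈ G, (I.filter fun S => e ⊆ S).card < a) ∧
    ∃ I₁ ⊆ I, (I.card : ℚ) / (r * ((a : ℚ) - 1)) ≤ (I₁.card : ℚ) ∧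
      ∀ S ∈ I₁, ∀ T ∈ I₁, S ≠ T →
        ∀ f : Finset α, f.card = r - 1 → f ⊆ S → f ⊆ T → False := by
  have hdeg : ∀ e ∈ G, (I.filter fun S => e ⊆ S).card < a := fun e he =>
    card_filter_superset_lt hA he
  refine ⟨hdeg, ?_⟩
  -- two `r`-sets share an `(r-1)`-subset iff they meet in at least `r - 1` points
  let EdgeDisjoint (S T : Finset α) : Prop := (S ∩ T).card < r - 1
  have : Std.Symm EdgeDisjoint := ⟨fun S T (h : (S ∩ T).card < r - 1) =>
    show (T ∩ S).card < r - 1 by rwa [inter_comm]⟩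
  obtain ⟨I₁, hI₁, hdisj, hmax⟩ := I.exists_maximal_pairwise_subset EdgeDisjoint
  have hcover : ∀ S ∈ I, ∃ T ∈ I₁, r - 1 ≤ (S ∩ T).card := fun S hS => by
    obtain ⟨T, hT, rfl | hST⟩ := hmax S hS
    · exact ⟨S, hT, by rw [inter_self, (hI S hS).1]; exact Nat.sub_le r 1⟩
    · exact ⟨T, hT, not_lt.1 hST⟩
  have hcard : I.card ≤ I₁.card * (r * (a - 1)) := by
    have := card_le_card_mul_of_forall_exists_inter (fun T hT => (hI T (hI₁ hT)).1) hcover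
      fun T hT f hfT hf => Nat.le_sub_one_of_lt
        (hdeg f ((hI T (hI₁ hT)).2 f (mem_powersetCard.2 ⟨hfT, hf⟩)))
    rwa [Nat.choose_symm (by omega), Nat.choose_one_right] at this
  refine ⟨I₁, hI₁, ?_, fun S hS T hT hST f hf hfS hfT => (hdisj hS hT hST).not_ge ?_⟩
  · rw [← Nat.cast_pred (by omega : 0 < a)]
    exact div_le_of_le_mul₀ (by positivity) (by positivity) (by exact_mod_cast hcard)
  · exact hf ▸ card_le_card (subset_inter hfS hfT)

theorem stmt17 {α : Type*} [DecidableEq α] {r a : ℕ} (hr : 3 ≤ r) (ha : 2 ≤ a)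
    (G : Finset (Finset α)) (hG : ∀ e ∈ G, e.card = r - 1)
    (I : Finset (Finset α)) (hI : ∀ S ∈ I, SpansClique G r S)
    -- no `a`-element subset of `I` consists of cliques sharing a common edge
    (hA : ∀ T ⊆ I, T.card = a → ¬ ∃ e ∈ G, ∀ S ∈ T, e ⊆ S) :
    (∀ e ∈ G, (I.filter fun S => e ⊆ S).card < a) ∧
    ∃ I₁ ⊆ I, (I.card : ℚ) / (r * ((a : ℚ) - 1)) ≤ (I₁.card : ℚ) ∧
      ∀ S ∈ I₁, ∀ T ∈ I₁, S ≠ T →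
        ∀ f : Finset α, f.card = r - 1 → f ⊆ S → f ⊆ T → False :=
  stmt17_general hr ha G I hI hA
end
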